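/- Define η(p,T) = -log p + 2 tanh⁻¹(α) + (5/2 + T_i/T)·α + (5/2) log T with α = (1 + κ p T^{-5/2} e^{T_i/T})^{-1/2}. Then ∂η/∂T at fixed p equals ((1+α)/T)·(5/2 + (α/2)(1-α)(5/2 + T_i/T)²), which is ≥ (5/(2T))(1+α) > 0. -/

import Mathlib

/-- Inverse hyperbolic tangent. -/
noncomputable def artanh (x : ℝ) : ℝ := (1 / 2) * Real.log ((1 + x) / (1 - x))

/-- Saha ionization degree. -/
noncomputable def sahaAlpha (κ Ti p T : ℝ) : ℝ :=
  (1 + κ * p * T ^ (-(5/2) : ℝ) * Real.exp (Ti / T)) ^ (-(1/2) : ℝ)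

/-- Dimensionless entropy η(p,T) = -log p + 2 tanh⁻¹ α + (5/2 + T_i/T)α + (5/2) log T. -/
noncomputable def eta (κ Ti p T : ℝ) : ℝ :=
  -Real.log p + 2 * artanh (sahaAlpha κ Ti p T) + (5/2 + Ti / T) * sahaAlpha κ Ti p T
    + (5/2) * Real.log T

/-!
With `E = κ p T^{-5/2} e^{T_i/T}` one has `α² (1 + E) = 1` and `dE/dT = -E (5/2 + T_i/T) / T`, so
`dα/dT = α (1 - α²) (5/2 + T_i/T) / (2T)`. As `artanh' = 1 / (1 - α²)`, the term `2 artanh α`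
contributes `α (5/2 + T_i/T) / T`, and collecting terms factors out `(1 + α) / T`. The lower bound
is the nonnegativity of `α (1 - α) (5/2 + T_i/T)² / 2` for `0 < α < 1`.
-/

lemma hasDerivAt_artanh {x : ℝ} (h₁ : x ≠ 1) (h₂ : x ≠ -1) :
    HasDerivAt artanh (1 / (1 - x ^ 2)) x := by
  have hplus : 1 + x ≠ 0 := fun h => h₂ (by linarith)
  have hminus : 1 - x ≠ 0 := sub_ne_zero.2 h₁.symm
  have hsq : 1 - x ^ 2 ≠ 0 := by
    rw [show 1 - x ^ 2 = (1 - x) * (1 + x) by ring]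
    exact mul_ne_zero hminus hplus
  have h := ((((hasDerivAt_id x).const_add 1).div ((hasDerivAt_id x).const_sub 1) hminus).log
    (div_ne_zero hplus hminus)).const_mul (1 / 2)
  refine h.congr_deriv ?_
  simp only [id, Pi.div_apply]
  field_simp
  ring

lemma HasDerivAt.rpow_neg_half {f : ℝ → ℝ} {f' x : ℝ} (hf : HasDerivAt f f' x) (hx : 0 < f x) :
    HasDerivAt (fun y => f y ^ (-(1 / 2) : ℝ)) (-(f x ^ (-(1 / 2) : ℝ)) ^ 3 * f' / 2) x := by
  convert hf.rpow_const (p := -(1 / 2)) (Or.inl hx.ne') using 1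
  rw [← Real.rpow_natCast, ← Real.rpow_mul hx.le]
  norm_num
  ring

lemma rpow_neg_half_sq_mul {y : ℝ} (hy : 0 < y) : (y ^ (-(1 / 2) : ℝ)) ^ 2 * y = 1 := by
  rw [← Real.rpow_natCast, ← Real.rpow_mul hy.le]
  norm_num [Real.rpow_neg_one, hy.ne']

noncomputable def sahaRatio (κ Ti p T : ℝ) : ℝ := κ * p * T ^ (-(5 / 2) : ℝ) * Real.exp (Ti / T)

lemma sahaAlpha_eq (κ Ti p T : ℝ) :
    sahaAlpha κ Ti p T = (1 + sahaRatio κ Ti p T) ^ (-(1 / 2) : ℝ) := rfl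

lemma hasDerivAt_sahaRatio (κ Ti p : ℝ) {T : ℝ} (hT : T ≠ 0) :
    HasDerivAt (sahaRatio κ Ti p) (-sahaRatio κ Ti p T * (5 / 2 + Ti / T) / T) T := by
  have hexp := ((hasDerivAt_inv hT).const_mul Ti).exp
  refine (((Real.hasDerivAt_rpow_const (p := -(5 / 2)) (Or.inl hT)).const_mul (κ * p)).mul
    hexp).congr_deriv ?_
  rw [sahaRatio, Real.rpow_sub_one hT]
  field_simp
  ring

section positive

variable {κ Ti p T : ℝ}

lemma sahaRatio_pos (hκ : 0 < κ) (hp : 0 < p) (hT : 0 < T) : 0 < sahaRatio κ Ti p T := by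
  unfold sahaRatio
  positivity

lemma sahaAlpha_pos (hκ : 0 < κ) (hp : 0 < p) (hT : 0 < T) : 0 < sahaAlpha κ Ti p T := by
  rw [sahaAlpha_eq]
  exact Real.rpow_pos_of_pos (by linarith [sahaRatio_pos (Ti := Ti) hκ hp hT]) _

lemma sahaAlpha_lt_one (hκ : 0 < κ) (hp : 0 < p) (hT : 0 < T) : sahaAlpha κ Ti p T < 1 := by
  rw [sahaAlpha_eq]
  exact Real.rpow_lt_one_of_one_lt_of_neg
    (by linarith [sahaRatio_pos (Ti := Ti) hκ hp hT]) (by norm_num)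

lemma sahaAlpha_sq_mul_sahaRatio (hκ : 0 < κ) (hp : 0 < p) (hT : 0 < T) :
    sahaAlpha κ Ti p T ^ 2 * sahaRatio κ Ti p T = 1 - sahaAlpha κ Ti p T ^ 2 := by
  have h := rpow_neg_half_sq_mul (add_pos one_pos (sahaRatio_pos (Ti := Ti) hκ hp hT))
  rw [← sahaAlpha_eq] at h
  linear_combination h

lemma hasDerivAt_sahaAlpha (hκ : 0 < κ) (hp : 0 < p) (hT : 0 < T) :
    HasDerivAt (sahaAlpha κ Ti p)
      (sahaAlpha κ Ti p T * (1 - sahaAlpha κ Ti p T ^ 2) * (5 / 2 + Ti / T) / (2 * T)) T := by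
  have h := ((hasDerivAt_sahaRatio κ Ti p hT.ne').const_add 1).rpow_neg_half
    (add_pos one_pos (sahaRatio_pos hκ hp hT))
  rw [← sahaAlpha_eq] at h
  refine h.congr_deriv ?_
  rw [← sahaAlpha_sq_mul_sahaRatio hκ hp hT]
  field_simp

end positive

theorem eta_deriv_T_general (κ Ti p T : ℝ) (hκ : 0 < κ)
    (hp : 0 < p) (hT : 0 < T) :
    HasDerivAt (fun T' : ℝ => eta κ Ti p T')
      (((1 + sahaAlpha κ Ti p T) / T) *
        (5/2 + (sahaAlpha κ Ti p T / 2) * (1 - sahaAlpha κ Ti p T) * (5/2 + Ti / T) ^ 2)) T ∧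
    ((1 + sahaAlpha κ Ti p T) / T) *
        (5/2 + (sahaAlpha κ Ti p T / 2) * (1 - sahaAlpha κ Ti p T) * (5/2 + Ti / T) ^ 2)
      ≥ (5 / (2 * T)) * (1 + sahaAlpha κ Ti p T) ∧
    0 < (5 / (2 * T)) * (1 + sahaAlpha κ Ti p T) := by
  have hα₀ := sahaAlpha_pos (Ti := Ti) hκ hp hT
  have hα₁ := sahaAlpha_lt_one (Ti := Ti) hκ hp hT
  have hα := hasDerivAt_sahaAlpha (Ti := Ti) hκ hp hT
  have hartanh := (hasDerivAt_artanh hα₁.ne (by linarith)).comp T hα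
  have hcoeff := ((hasDerivAt_inv hT.ne').const_mul Ti).const_add (5 / 2)
  have hη := (((hartanh.const_mul 2).const_add (-Real.log p)).add (hcoeff.mul hα)).add
    ((Real.hasDerivAt_log hT.ne').const_mul (5 / 2))
  refine ⟨?_, ?_, by positivity⟩
  · refine hη.congr_deriv ?_
    have hα_sq : 1 - sahaAlpha κ Ti p T ^ 2 ≠ 0 := by nlinarith
    field_simp
    ring
  · have hcorr : 0 ≤ (sahaAlpha κ Ti p T / 2) * (1 - sahaAlpha κ Ti p T) * (5/2 + Ti / T) ^ 2 :=
      mul_nonneg (mul_nonneg (by positivity) (by linarith)) (sq_nonneg _)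
    calc (5 / (2 * T)) * (1 + sahaAlpha κ Ti p T)
        = ((1 + sahaAlpha κ Ti p T) / T) * (5 / 2) := by field_simp
      _ ≤ _ := by gcongr; linarith

/-- ∂η/∂T at fixed p equals ((1+α)/T)(5/2 + (α/2)(1-α)(5/2+T_i/T)²), which is
≥ (5/(2T))(1+α) > 0. -/
theorem eta_deriv_T (κ Ti p T : ℝ) (hκ : 0 < κ) (hTi : 0 < Ti)
    (hp : 0 < p) (hT : 0 < T) :
    HasDerivAt (fun T' : ℝ => eta κ Ti p T')
      (((1 + sahaAlpha κ Ti p T) / T) *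
        (5/2 + (sahaAlpha κ Ti p T / 2) * (1 - sahaAlpha κ Ti p T) * (5/2 + Ti / T) ^ 2)) T ∧
    ((1 + sahaAlpha κ Ti p T) / T) *
        (5/2 + (sahaAlpha κ Ti p T / 2) * (1 - sahaAlpha κ Ti p T) * (5/2 + Ti / T) ^ 2)
      ≥ (5 / (2 * T)) * (1 + sahaAlpha κ Ti p T) ∧
    0 < (5 / (2 * T)) * (1 + sahaAlpha κ Ti p T) :=
  eta_deriv_T_general κ Ti p T hκ hp hT
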